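/- arXiv:2404.15023 — 3 statements merged into one kernel-verified Lean document; each statement's English description precedes it below -/
import Mathlib

section
/- If X is a real-valued random variable with distribution function F, and V is uniformly distributed on [0,1] and independent of X, then the random variable U := F(X-) + V·(F(X) − F(X-)) is uniformly distributed on [0,1]. -/
/-!
Independence makes the law of `U` the image of `μ ⊗ Unif[0,1]` (with `μ` the law of `X`) under
`(x, v) ↦ F(x-) + v (F(x) - F(x-))`, so `P(U ≤ u) = ∫ Leb{v ∈ [0,1] : F(x-) + v ΔF(x) ≤ u} dμ(x)`.
The integrand is `1` where `F(x) ≤ u` and `0` where `u ≤ F(x-)` and `u < F(x)`. If `u` lies in the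
jump `(F(a-), F(a))` of an atom `a`, it is therefore `1` left of `a` and `0` right of `a`, and the
integral is `F(a-) + μ{a} (u - F(a-)) / ΔF(a) = u`. Otherwise it is `μ{F ≤ u}`, and inner
regularity gives `μ{F ≤ u} ≤ u` and `μ{F > u} ≤ 1 - u`: a compact subset of the first set lies
below its maximum `m` with `F(m) ≤ u`, one of the second above its minimum `m` with `F(m-) ≥ u`.
-/

open MeasureTheory ProbabilityTheory Set

instance isProbabilityMeasure_volume_restrict_Icc_zero_one :
    IsProbabilityMeasure (volume.restrict (Icc (0:ℝ) 1)) :=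
  ⟨by simp⟩

section InnerRegular

variable {α : Type*} [ConditionallyCompleteLinearOrder α] [TopologicalSpace α] [OrderTopology α]
  [MeasurableSpace α] {μ : Measure α} [μ.InnerRegular] {s : Set α} {c : ENNReal}

theorem measure_le_of_forall_measure_Iic_le (hs : MeasurableSet s)
    (h : ∀ x ∈ s, μ (Iic x) ≤ c) : μ s ≤ c := by
  rw [hs.measure_eq_iSup_isCompact]
  refine iSup₂_le fun K hKs => iSup_le fun hK => ?_
  rcases K.eq_empty_or_nonempty with rfl | hne
  · simp
  · exact (measure_mono fun x hx => le_csSup hK.bddAbove hx).trans (h _ (hKs (hK.sSup_mem hne)))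

theorem measure_le_of_forall_measure_Ici_le (hs : MeasurableSet s)
    (h : ∀ x ∈ s, μ (Ici x) ≤ c) : μ s ≤ c := by
  rw [hs.measure_eq_iSup_isCompact]
  refine iSup₂_le fun K hKs => iSup_le fun hK => ?_
  rcases K.eq_empty_or_nonempty with rfl | hne
  · simp
  · exact (measure_mono fun x hx => csInf_le hK.bddBelow hx).trans (h _ (hKs (hK.sInf_mem hne)))

end InnerRegular

theorem measure_eq_of_le_of_compl_le {α : Type*} [MeasurableSpace α] {μ ν : Measure α}
    [IsProbabilityMeasure μ] [IsProbabilityMeasure ν] {s t : Set α} (hs : MeasurableSet s)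
    (ht : MeasurableSet t) (h : μ s ≤ ν t) (hc : μ sᶜ ≤ ν tᶜ) : μ s = ν t := by
  refine le_antisymm h ?_
  rw [← compl_compl s, ← compl_compl t, prob_compl_eq_one_sub hs.compl,
    prob_compl_eq_one_sub ht.compl]
  exact tsub_le_tsub_left hc 1

section UnitInterval

variable {a b u : ℝ}

theorem volume_restrict_Icc_zero_one_Iic {t : ℝ} (ht : t ≤ 1) :
    volume.restrict (Icc (0:ℝ) 1) (Iic t) = ENNReal.ofReal t := by
  have : Iic t ∩ Icc 0 1 = Icc 0 t :=
    Set.ext fun v => ⟨fun h => ⟨h.2.1, h.1⟩, fun h => ⟨h.2, h.1, h.2.trans ht⟩⟩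
  rw [Measure.restrict_apply measurableSet_Iic, this, Real.volume_Icc, sub_zero]

theorem volume_restrict_Icc_zero_one_Iic_measureReal {α : Type*} [MeasurableSpace α]
    (μ : Measure α) [IsProbabilityMeasure μ] (s : Set α) :
    volume.restrict (Icc (0:ℝ) 1) (Iic (μ.real s)) = μ s := by
  rw [volume_restrict_Icc_zero_one_Iic measureReal_le_one, measureReal_def,
    ENNReal.ofReal_toReal (measure_ne_top μ s)]

theorem volume_restrict_Icc_zero_one_affine_le_of_le (hab : a ≤ b) (hbu : b ≤ u) :
    volume.restrict (Icc (0:ℝ) 1) {v | a + v * (b - a) ≤ u} = 1 := by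
  rw [Measure.restrict_apply_superset fun v hv => ?_, Real.volume_Icc]
  · simp
  · have : v * (b - a) ≤ b - a := mul_le_of_le_one_left (sub_nonneg.2 hab) hv.2
    simp only [mem_ofPred_eq]
    linarith

theorem volume_restrict_Icc_zero_one_affine_le_of_mem_Ioo (hau : a < u) (hub : u < b) :
    volume.restrict (Icc (0:ℝ) 1) {v | a + v * (b - a) ≤ u}
      = ENNReal.ofReal ((u - a) / (b - a)) := by
  have hba : 0 < b - a := by linarith
  have hset : {v | a + v * (b - a) ≤ u} = Iic ((u - a) / (b - a)) := by
    ext v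
    rw [mem_ofPred_eq, mem_Iic, le_div_iff₀ hba]
    constructor <;> intro <;> linarith
  rw [hset, volume_restrict_Icc_zero_one_Iic ((div_le_one hba).2 (by linarith))]

theorem volume_restrict_Icc_zero_one_affine_le_of_le_of_lt (hab : a ≤ b) (hua : u ≤ a)
    (hub : u < b) :
    volume.restrict (Icc (0:ℝ) 1) {v | a + v * (b - a) ≤ u} = 0 := by
  have hnull : volume.restrict (Icc (0:ℝ) 1) (Iic 0) = 0 := by
    simpa using volume_restrict_Icc_zero_one_Iic zero_le_one
  refine measure_mono_null (fun v (hv : a + v * (b - a) ≤ u) => ?_) hnull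
  rcases hab.lt_or_eq with hab | rfl
  · rw [mem_Iic]
    by_contra! hv₀
    nlinarith [mul_pos hv₀ (sub_pos.2 hab)]
  · simp only [sub_self, mul_zero, add_zero] at hv
    linarith

end UnitInterval

section Monotone

variable {α : Type*} [Preorder α] [MeasurableSpace α] (μ : Measure α) [IsFiniteMeasure μ]

theorem monotone_measureReal_Iic : Monotone fun x => μ.real (Iic x) :=
  fun _ _ h => measureReal_mono (Iic_subset_Iic.2 h)

theorem monotone_measureReal_Iio : Monotone fun x => μ.real (Iio x) :=
  fun _ _ h => measureReal_mono (Iio_subset_Iio h)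

end Monotone

noncomputable def distribTransform (μ : Measure ℝ) (x v : ℝ) : ℝ :=
  μ.real (Iio x) + v * (μ.real (Iic x) - μ.real (Iio x))

namespace distribTransform

variable (μ : Measure ℝ) [IsProbabilityMeasure μ] {u : ℝ}

theorem measurable_uncurry : Measurable (Function.uncurry (distribTransform μ)) := by
  have hIic : Measurable fun p : ℝ × ℝ => μ.real (Iic p.1) :=
    (monotone_measureReal_Iic μ).measurable.comp measurable_fst
  have hIio : Measurable fun p : ℝ × ℝ => μ.real (Iio p.1) :=
    (monotone_measureReal_Iio μ).measurable.comp measurable_fst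
  exact hIio.add (measurable_snd.mul (hIic.sub hIio))

theorem lintegral_setOf_le_of_mem_jump {a : ℝ} (hau : μ.real (Iio a) < u)
    (hua : u < μ.real (Iic a)) :
    ∫⁻ x, volume.restrict (Icc (0:ℝ) 1) {v | distribTransform μ x v ≤ u} ∂μ
      = volume.restrict (Icc (0:ℝ) 1) (Iic u) := by
  set r := (u - μ.real (Iio a)) / (μ.real (Iic a) - μ.real (Iio a))
  have hslice : ∀ x, volume.restrict (Icc (0:ℝ) 1) {v | distribTransform μ x v ≤ u}
      = (Iio a).indicator 1 x + ({a} : Set ℝ).indicator (fun _ => ENNReal.ofReal r) x := by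
    intro x
    have hjump : μ.real (Iio x) ≤ μ.real (Iic x) := measureReal_mono Iio_subset_Iic_self
    rcases lt_trichotomy x a with hx | rfl | hx
    · have hxu : μ.real (Iic x) ≤ u := (measureReal_mono (Iic_subset_Iio.2 hx)).trans hau.le
      rw [indicator_of_mem (mem_Iio.2 hx), indicator_of_notMem (notMem_singleton_iff.2 hx.ne),
        Pi.one_apply, add_zero]
      exact volume_restrict_Icc_zero_one_affine_le_of_le hjump hxu
    · rw [indicator_of_notMem self_notMem_Iio, indicator_of_mem (mem_singleton x), zero_add]
      exact volume_restrict_Icc_zero_one_affine_le_of_mem_Ioo hau hua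
    · have hux : u < μ.real (Iio x) := hua.trans_le (measureReal_mono (Iic_subset_Iio.2 hx))
      rw [indicator_of_notMem (notMem_Iio.2 hx.le),
        indicator_of_notMem (notMem_singleton_iff.2 hx.ne'), add_zero]
      exact volume_restrict_Icc_zero_one_affine_le_of_le_of_lt hjump hux.le
        (hux.trans_le hjump)
  have hatom : μ.real {a} = μ.real (Iic a) - μ.real (Iio a) := by
    rw [← Iio_union_right, measureReal_union (by simp) (measurableSet_singleton a)]
    ring
  rw [lintegral_congr hslice, lintegral_add_left (measurable_one.indicator measurableSet_Iio),
    lintegral_indicator_one measurableSet_Iio,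
    lintegral_indicator_const (measurableSet_singleton a), ← ofReal_measureReal,
    ← ofReal_measureReal, hatom, ← ENNReal.ofReal_mul (div_nonneg (by linarith) (by linarith)),
    div_mul_cancel₀ _ (by linarith), ← ENNReal.ofReal_add measureReal_nonneg (by linarith),
    add_sub_cancel, volume_restrict_Icc_zero_one_Iic (hua.le.trans measureReal_le_one)]

theorem lintegral_setOf_le_of_forall_notMem_jump
    (h : ∀ x, u < μ.real (Iic x) → u ≤ μ.real (Iio x)) :
    ∫⁻ x, volume.restrict (Icc (0:ℝ) 1) {v | distribTransform μ x v ≤ u} ∂μ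
      = volume.restrict (Icc (0:ℝ) 1) (Iic u) := by
  set S := {x | μ.real (Iic x) ≤ u}
  have hS : MeasurableSet S :=
    measurableSet_le (monotone_measureReal_Iic μ).measurable measurable_const
  have hslice : ∀ x, volume.restrict (Icc (0:ℝ) 1) {v | distribTransform μ x v ≤ u}
      = S.indicator 1 x := by
    intro x
    have hjump : μ.real (Iio x) ≤ μ.real (Iic x) := measureReal_mono Iio_subset_Iic_self
    by_cases hx : x ∈ S
    · rw [indicator_of_mem hx, Pi.one_apply]
      exact volume_restrict_Icc_zero_one_affine_le_of_le hjump hx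
    · rw [indicator_of_notMem hx]
      have hux : u < μ.real (Iic x) := not_le.1 hx
      exact volume_restrict_Icc_zero_one_affine_le_of_le_of_lt hjump (h x hux) hux
  rw [lintegral_congr hslice, lintegral_indicator_one hS]
  refine measure_eq_of_le_of_compl_le hS measurableSet_Iic ?_ ?_
  · refine measure_le_of_forall_measure_Iic_le hS fun x hx => ?_
    rw [← volume_restrict_Icc_zero_one_Iic_measureReal μ]
    exact measure_mono (Iic_subset_Iic.2 hx)
  · refine measure_le_of_forall_measure_Ici_le hS.compl fun x hx => ?_
    rw [← compl_Iio, prob_compl_eq_one_sub measurableSet_Iio,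
      ← volume_restrict_Icc_zero_one_Iic_measureReal μ, ← prob_compl_eq_one_sub measurableSet_Iic]
    exact measure_mono (compl_subset_compl.2 (Iic_subset_Iic.2 (h x (not_le.1 hx))))

theorem lintegral_setOf_le (u : ℝ) :
    ∫⁻ x, volume.restrict (Icc (0:ℝ) 1) {v | distribTransform μ x v ≤ u} ∂μ
      = volume.restrict (Icc (0:ℝ) 1) (Iic u) := by
  by_cases hjump : ∀ x, u < μ.real (Iic x) → u ≤ μ.real (Iio x)
  · exact lintegral_setOf_le_of_forall_notMem_jump μ hjump
  · push Not at hjump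
    obtain ⟨a, hua, hau⟩ := hjump
    exact lintegral_setOf_le_of_mem_jump μ hau hua

theorem map_prod_volume_restrict :
    (μ.prod (volume.restrict (Icc (0:ℝ) 1))).map (Function.uncurry (distribTransform μ))
      = volume.restrict (Icc (0:ℝ) 1) := by
  refine Measure.ext_of_Iic _ _ fun u => ?_
  rw [Measure.map_apply (measurable_uncurry μ) measurableSet_Iic,
    Measure.prod_apply (measurable_uncurry μ measurableSet_Iic)]
  exact lintegral_setOf_le μ u

end distribTransform

theorem stmt0 {Ω : Type*} [MeasurableSpace Ω] (P : Measure Ω) [IsProbabilityMeasure P]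
    (X V : Ω → ℝ) (hXm : Measurable X) (hVm : Measurable V)
    (hV : Measure.map V P = volume.restrict (Set.Icc (0:ℝ) 1))
    (hindep : IndepFun X V P)
    (F Fm : ℝ → ℝ)
    (hF : ∀ x, F x = (P {ω | X ω ≤ x}).toReal)
    (hFm : ∀ x, Fm x = (P {ω | X ω < x}).toReal)
    (U : Ω → ℝ)
    (hU : ∀ ω, U ω = Fm (X ω) + V ω * (F (X ω) - Fm (X ω))) :
    Measure.map U P = volume.restrict (Set.Icc (0:ℝ) 1) := by
  set μ := P.map X
  have : IsProbabilityMeasure μ := Measure.isProbabilityMeasure_map hXm.aemeasurable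
  have hF' : ∀ x, F x = μ.real (Iic x) := fun x => by
    rw [hF, measureReal_def, Measure.map_apply hXm measurableSet_Iic]; rfl
  have hFm' : ∀ x, Fm x = μ.real (Iio x) := fun x => by
    rw [hFm, measureReal_def, Measure.map_apply hXm measurableSet_Iio]; rfl
  have hU' : U = Function.uncurry (distribTransform μ) ∘ fun ω => (X ω, V ω) := by
    funext ω
    rw [hU, hF', hFm']
    rfl
  have hjoint : P.map (fun ω => (X ω, V ω)) = μ.prod (volume.restrict (Icc (0:ℝ) 1)) := by
    rw [← hV]
    exact (indepFun_iff_map_prod_eq_prod_map_map hXm.aemeasurable hVm.aemeasurable).1 hindep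
  rw [hU', ← Measure.map_map (distribTransform.measurable_uncurry μ) (hXm.prodMk hVm), hjoint,
    distribTransform.map_prod_volume_restrict]
end

section
/- If X is a real-valued random variable with distribution function F, V ~ U[0,1] is independent of X, and U := F(X-) + V·(F(X) − F(X-)), then F⁻¹(U) = X almost surely, where F⁻¹ is the left-continuous quantile function F⁻¹(u) = inf{x : F(x) ≥ u}. -/
open MeasureTheory ProbabilityTheory

theorem stmt1 {Ω : Type*} [MeasurableSpace Ω] (P : Measure Ω) [IsProbabilityMeasure P]
    (X V : Ω → ℝ) (hXm : Measurable X) (hVm : Measurable V)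
    (hV : Measure.map V P = volume.restrict (Set.Icc (0:ℝ) 1))
    (hindep : IndepFun X V P)
    (F Fm : ℝ → ℝ)
    (hF : ∀ x, F x = (P {ω | X ω ≤ x}).toReal)
    (hFm : ∀ x, Fm x = (P {ω | X ω < x}).toReal)
    (U : Ω → ℝ)
    (hU : ∀ ω, U ω = Fm (X ω) + V ω * (F (X ω) - Fm (X ω))) :
    ∀ᵐ ω ∂P, sInf {x : ℝ | U ω ≤ F x} = X ω := by
  classical
  set μ : Measure ℝ := P.map X with hμdef
  have hprob : IsProbabilityMeasure μ := Measure.isProbabilityMeasure_map hXm.aemeasurable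
  have hfin : ∀ s : Set ℝ, μ s ≠ ⊤ := fun s => measure_ne_top μ s
  have hFμ : ∀ x, F x = (μ (Set.Iic x)).toReal := by
    intro x
    rw [hF, hμdef, Measure.map_apply hXm measurableSet_Iic]
    rfl
  have hFmμ : ∀ x, Fm x = (μ (Set.Iio x)).toReal := by
    intro x
    rw [hFm, hμdef, Measure.map_apply hXm measurableSet_Iio]
    rfl
  have hsplit : ∀ x, μ (Set.Iic x) = μ (Set.Iio x) + μ {x} := by
    intro x
    rw [← Set.Iio_union_right, measure_union (by simp) (measurableSet_singleton x)]
  have hdiff : ∀ x, F x - Fm x = (μ {x}).toReal := by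
    intro x
    rw [hFμ, hFmμ, hsplit, ENNReal.toReal_add (hfin _) (hfin _)]
    ring
  have hle : ∀ a b, a < b → F a ≤ Fm b := by
    intro a b hab
    rw [hFμ, hFmμ]
    exact ENNReal.toReal_mono (hfin _) (measure_mono (Set.Iic_subset_Iio.mpr hab))
  have hIoo0 : ∀ a b, a < b → F a = Fm b → μ (Set.Ioo a b) = 0 := by
    intro a b hab heq
    have h1 : μ (Set.Iic a) = μ (Set.Iio b) := by
      rw [← ENNReal.toReal_eq_toReal_iff' (hfin _) (hfin _), ← hFμ, ← hFmμ]
      exact heq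
    have h2 : μ (Set.Iio b) = μ (Set.Iic a) + μ (Set.Ioo a b) := by
      rw [← Set.Iic_union_Ioo_eq_Iio hab]
      exact measure_union
        (Set.disjoint_left.mpr fun z hz hz2 => absurd hz2.1 (not_lt.mpr hz)) measurableSet_Ioo
    have h3 : μ (Set.Iic a) + 0 = μ (Set.Iic a) + μ (Set.Ioo a b) :=
      (add_zero _).trans (h1.trans h2)
    exact ((ENNReal.add_right_inj (hfin _)).mp h3).symm
  -- the open null set O covering interiors of flat parts
  set O : Set ℝ := ⋃ p ∈ {p : ℚ × ℚ | μ (Set.Ioo (p.1 : ℝ) (p.2 : ℝ)) = 0},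
      Set.Ioo (p.1 : ℝ) (p.2 : ℝ) with hOdef
  have hOmeas : MeasurableSet O :=
    MeasurableSet.biUnion (Set.to_countable _) (fun _ _ => measurableSet_Ioo)
  have hO0 : μ O = 0 := by
    rw [hOdef, measure_biUnion_null_iff (Set.to_countable _)]
    exact fun p hp => hp
  have hsubO : ∀ (q : ℚ) (b : ℝ), μ (Set.Ioo (q : ℝ) b) = 0 → Set.Ioo (q : ℝ) b ⊆ O := by
    intro q b hnull x hx
    obtain ⟨q2, hq2⟩ := exists_rat_btwn hx.2
    refine Set.mem_biUnion (show ((q, q2) : ℚ × ℚ) ∈ _ from ?_) ⟨hx.1, hq2.1⟩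
    exact measure_mono_null (Set.Ioo_subset_Ioo le_rfl hq2.2.le) hnull
  -- the countable null set D
  set D : Set ℝ := {b | μ {b} = 0 ∧ b ∉ O ∧ ∃ q : ℚ, (q : ℝ) < b ∧ μ (Set.Ioo (q : ℝ) b) = 0}
    with hDdef
  have hDcount : D.Countable := by
    have : Set.InjOn (fun b => if h : b ∈ D then (h.2.2.choose : ℚ) else 0) D := by
      intro b hb b' hb' hq
      simp only [dif_pos hb, dif_pos hb'] at hq
      by_contra hne
      rcases lt_or_gt_of_ne hne with h | h
      · exact hb.2.1 (hsubO _ _ hb'.2.2.choose_spec.2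
          ⟨hq ▸ hb.2.2.choose_spec.1, h⟩)
      · exact hb'.2.1 (hsubO _ _ hb.2.2.choose_spec.2
          ⟨hq ▸ hb'.2.2.choose_spec.1, h⟩)
    exact Set.countable_of_injective_of_countable_image this (Set.to_countable _)
  have hD0 : μ D = 0 := by
    rw [← Set.biUnion_of_singleton D, measure_biUnion_null_iff hDcount]
    exact fun b hb => hb.1
  set N : Set ℝ := O ∪ D with hNdef
  have hNmeas : MeasurableSet N := hOmeas.union hDcount.measurableSet
  have hN0 : μ N = 0 := measure_union_null hO0 hD0
  have hBN : ∀ b : ℝ, μ {b} = 0 → ∀ a < b, μ (Set.Ioo a b) = 0 → b ∈ N := by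
    intro b hb a hab hab0
    by_cases hbO : b ∈ O
    · exact Or.inl hbO
    · refine Or.inr ⟨hb, hbO, ?_⟩
      obtain ⟨q, hq⟩ := exists_rat_btwn hab
      exact ⟨q, hq.2, measure_mono_null (Set.Ioo_subset_Ioo hq.1.le le_rfl) hab0⟩
  -- a.e. properties
  have hV01 : ∀ᵐ ω ∂P, 0 < V ω ∧ V ω ≤ 1 := by
    rw [ae_iff]
    have : {ω | ¬(0 < V ω ∧ V ω ≤ 1)} = V ⁻¹' (Set.Ioc (0:ℝ) 1)ᶜ := by
      ext ω; simp [Set.mem_Ioc]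
    rw [this, ← Measure.map_apply hVm measurableSet_Ioc.compl, hV,
      Measure.restrict_apply measurableSet_Ioc.compl]
    have : (Set.Ioc (0:ℝ) 1)ᶜ ∩ Set.Icc (0:ℝ) 1 = {0} := by
      ext x
      simp only [Set.mem_inter_iff, Set.mem_compl_iff, Set.mem_Ioc, Set.mem_Icc,
        Set.mem_singleton_iff]
      constructor
      · rintro ⟨h1, h2, h3⟩
        by_contra hx
        exact h1 ⟨lt_of_le_of_ne h2 (Ne.symm hx), h3⟩
      · rintro rfl; simp
    rw [this]
    simp
  have hXN : ∀ᵐ ω ∂P, X ω ∉ N := by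
    rw [ae_iff]
    have : {ω | ¬ X ω ∉ N} = X ⁻¹' N := by ext ω; simp
    rw [this, ← Measure.map_apply hXm hNmeas, ← hμdef]
    exact hN0
  filter_upwards [hV01, hXN] with ω hv hxn
  set x := X ω with hx
  set S : Set ℝ := {y : ℝ | U ω ≤ F y} with hSdef
  have hdnn : 0 ≤ F x - Fm x := by rw [hdiff]; positivity
  have hmem : x ∈ S := by
    have : U ω ≤ F x := by
      rw [hU ω, ← hx]
      nlinarith [hv.1, hv.2]
    exact this
  have hlb : x ∈ lowerBounds S := by
    intro y hy
    by_contra hyx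
    push_neg at hyx
    have hFy : F y ≤ Fm x := hle _ _ hyx
    have hUy : U ω ≤ F y := hy
    rw [hU ω, ← hx] at hUy
    by_cases hatom : μ {x} = 0
    · have hd0 : F x - Fm x = 0 := by rw [hdiff, hatom]; simp
      have hFyeq : F y = Fm x := by nlinarith
      have hFmF : Fm x = F x := by linarith
      exact hxn (hBN x hatom y hyx (hIoo0 y x hyx (by linarith)))
    · have hdpos : 0 < F x - Fm x := by
        rw [hdiff]
        exact ENNReal.toReal_pos hatom (hfin _)
      nlinarith [hv.1]
  exact le_antisymm (csInf_le ⟨x, hlb⟩ hmem) (le_csInf ⟨x, hmem⟩ hlb)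
end

section
/- If a random vector X is negatively orthant dependent, then its checkerboard copula C⊥ is negatively orthant dependent, i.e., the random vector U = (U₁,…,U_d) defined by Uᵢ = Fᵢ(Xᵢ-) + Vᵢ(Fᵢ(Xᵢ) − Fᵢ(Xᵢ-)) with V ~ U([0,1]^d) independent of X satisfies P(U ≤ t) ≤ ∏ᵢ P(Uᵢ ≤ tᵢ) and P(U > t) ≤ ∏ᵢ P(Uᵢ > tᵢ) for all t ∈ ℝ^d. -/
open MeasureTheory ProbabilityTheory

/-- Negative orthant dependence (NOD). -/
def IsNOD {Ω : Type*} [MeasurableSpace Ω] (P : Measure Ω) {d : ℕ}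
    (X : Fin d → Ω → ℝ) : Prop :=
  ∀ x : Fin d → ℝ,
    P {ω | ∀ i, X i ω ≤ x i} ≤ ∏ i, P {ω | X i ω ≤ x i} ∧
    P {ω | ∀ i, x i < X i ω} ≤ ∏ i, P {ω | x i < X i ω}

/-!
Conditionally on `V = v`, the event `{U ≤ t}` is `{X ∈ ∏ᵢ sᵢ}` with every `sᵢ` a lower set of `ℝ`,
because `x ↦ Fm x + v (F x - Fm x)` is monotone for `v ∈ [0, 1]`; dually `{t < U}` is a product
of upper sets. NOD passes from orthants to such products by continuity of measure, since a
nonempty lower (upper) set of `ℝ` is the union of an increasing sequence of closed half-lines.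
Integrating over `v`, the independence of `X` and `V` and of the coordinates of `V` turns the
product of the conditional probabilities into the product of the marginals `P(Uᵢ ≤ tᵢ)`.
-/

open Filter Set Topology
open scoped ENNReal

section
variable {α : Type*} [LinearOrder α] [TopologicalSpace α] [OrderTopology α]
  [SecondCountableTopology α]

theorem IsLowerSet.exists_monotone_iUnion_Iic {s : Set α} (hs : IsLowerSet s)
    (hne : s.Nonempty) : ∃ a : ℕ → α, Monotone a ∧ ⋃ n, Iic (a n) = s := by
  have : OrdConnected s := hs.ordConnected
  have : Nonempty s := hne.to_subtype
  obtain ⟨a, ha, hlim⟩ := exists_seq_monotone_tendsto_atTop_atTop s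
  refine ⟨fun n => a n, fun m n h => ha h, ?_⟩
  refine Subset.antisymm (iUnion_subset fun n => hs.Iic_subset (a n).2) fun x hx => ?_
  obtain ⟨n, hn⟩ := (hlim.eventually_ge_atTop ⟨x, hx⟩).exists
  exact mem_iUnion.2 ⟨n, hn⟩

theorem IsUpperSet.exists_antitone_iUnion_Ici {s : Set α} (hs : IsUpperSet s)
    (hne : s.Nonempty) : ∃ b : ℕ → α, Antitone b ∧ ⋃ n, Ici (b n) = s :=
  IsLowerSet.exists_monotone_iUnion_Iic (α := αᵒᵈ) hs.toDual hne

end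

theorem iInter_Ioi_sub_eq_Ici {u : ℕ → ℝ} (hu : Tendsto u atTop (𝓝 0)) (hpos : ∀ n, 0 < u n)
    (a : ℝ) : ⋂ n, Ioi (a - u n) = Ici a := by
  ext y
  simp only [mem_iInter, mem_Ioi, mem_Ici]
  refine ⟨fun h => ?_, fun h n => by linarith [hpos n]⟩
  have hlim : Tendsto (fun n => a - u n) atTop (𝓝 a) := by
    simpa using tendsto_const_nhds.sub hu
  exact le_of_tendsto' hlim fun n => (h n).le

section
variable {Ω ι α : Type*} [MeasurableSpace Ω] {P : Measure Ω} {X : ι → Ω → α}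

theorem measure_forall_mem_eq_zero_of_eq_empty {s : ι → Set α} {i : ι} (hi : s i = ∅) :
    P {ω | ∀ i, X i ω ∈ s i} = 0 :=
  measure_mono_null (fun _ hω => by simpa [hi] using hω i) measure_empty

variable [Fintype ι]

theorem measure_forall_mem_iUnion_le_prod (t : ι → ℕ → Set α) (ht : ∀ i, Monotone (t i))
    (h : ∀ n, P {ω | ∀ i, X i ω ∈ t i n} ≤ ∏ i, P {ω | X i ω ∈ t i n}) :
    P {ω | ∀ i, X i ω ∈ ⋃ n, t i n} ≤ ∏ i, P {ω | X i ω ∈ ⋃ n, t i n} := by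
  have hset : {ω | ∀ i, X i ω ∈ ⋃ n, t i n} = ⋃ n, {ω | ∀ i, X i ω ∈ t i n} := by
    ext ω
    simpa only [mem_ofPred_eq, mem_univ_pi, mem_iUnion] using
      (Set.ext_iff.1 (iUnion_univ_pi_of_monotone ht) fun i => X i ω).symm
  have hmono : Monotone fun n => {ω | ∀ i, X i ω ∈ t i n} :=
    fun m n hmn ω hω i => ht i hmn (hω i)
  rw [hset, hmono.measure_iUnion]
  exact iSup_le fun n => (h n).trans <|
    Finset.prod_le_prod' fun i _ => measure_mono fun ω hω => mem_iUnion_of_mem n hω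

theorem measure_forall_mem_iInter_le_prod [MeasurableSpace α] [IsFiniteMeasure P]
    (hX : ∀ i, Measurable (X i)) (t : ι → ℕ → Set α) (ht : ∀ i, Antitone (t i))
    (htm : ∀ i n, MeasurableSet (t i n))
    (h : ∀ n, P {ω | ∀ i, X i ω ∈ t i n} ≤ ∏ i, P {ω | X i ω ∈ t i n}) :
    P {ω | ∀ i, X i ω ∈ ⋂ n, t i n} ≤ ∏ i, P {ω | X i ω ∈ ⋂ n, t i n} := by
  have hset : {ω | ∀ i, X i ω ∈ ⋂ n, t i n} = ⋂ n, {ω | ∀ i, X i ω ∈ t i n} := by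
    ext ω
    simp only [mem_iInter, mem_ofPred_eq]
    exact forall_comm
  have hcoord : ∀ i, {ω | X i ω ∈ ⋂ n, t i n} = ⋂ n, {ω | X i ω ∈ t i n} := fun i => by
    ext
    simp
  have hmeas : ∀ n, MeasurableSet {ω | ∀ i, X i ω ∈ t i n} := fun n => by
    rw [ofPred_forall]
    exact MeasurableSet.iInter fun i => hX i (htm i n)
  have hlhs := tendsto_measure_iInter_atTop (μ := P) (fun n => (hmeas n).nullMeasurableSet)
    (fun m n hmn ω hω i => ht i hmn (hω i)) ⟨0, measure_ne_top P _⟩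
  have hrhs := ENNReal.tendsto_finsetProd_of_ne_top Finset.univ (fun i _ =>
    tendsto_measure_iInter_atTop (μ := P) (s := fun n => {ω | X i ω ∈ t i n})
      (fun n => (hX i (htm i n)).nullMeasurableSet) (fun m n hmn ω hω => ht i hmn hω)
      ⟨0, measure_ne_top P _⟩) fun i _ => measure_ne_top P _
  simp only [hset, hcoord]
  exact le_of_tendsto_of_tendsto' hlhs hrhs h

end

theorem monotone_toReal_measure_le {Ω α : Type*} [MeasurableSpace Ω] [Preorder α]
    (P : Measure Ω) [IsFiniteMeasure P] (Y : Ω → α) :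
    Monotone fun x => (P {ω | Y ω ≤ x}).toReal := fun _ _ hxy =>
  ENNReal.toReal_mono (measure_ne_top _ _) (measure_mono fun _ h => le_trans h hxy)

theorem monotone_toReal_measure_lt {Ω α : Type*} [MeasurableSpace Ω] [Preorder α]
    (P : Measure Ω) [IsFiniteMeasure P] (Y : Ω → α) :
    Monotone fun x => (P {ω | Y ω < x}).toReal := fun _ _ hxy =>
  ENNReal.toReal_mono (measure_ne_top _ _) (measure_mono fun _ h => lt_of_lt_of_le h hxy)

theorem Monotone.add_mul_sub {α : Type*} [Preorder α] {f g : α → ℝ} (hf : Monotone f)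
    (hg : Monotone g) {v : ℝ} (hv : v ∈ Icc (0 : ℝ) 1) :
    Monotone fun x => f x + v * (g x - f x) := fun x y hxy => by
  have h₁ := mul_le_mul_of_nonneg_left (hf hxy) (sub_nonneg.2 hv.2)
  have h₂ := mul_le_mul_of_nonneg_left (hg hxy) hv.1
  linarith

section
variable {Ω α β : Type*} [MeasurableSpace Ω] [MeasurableSpace α] [MeasurableSpace β]
  {P : Measure Ω} [IsFiniteMeasure P]

theorem measurable_measure_mem_prodMk {X : Ω → α} (hX : Measurable X) {S : Set (α × β)}
    (hS : MeasurableSet S) : Measurable fun y => P {ω | (X ω, y) ∈ S} := by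
  have h : ∀ y, P {ω | (X ω, y) ∈ S} = P.map X ((·, y) ⁻¹' S) := fun y =>
    (Measure.map_apply hX (hS.preimage measurable_prodMk_right)).symm
  simpa only [h] using measurable_measure_prodMk_right hS

theorem ProbabilityTheory.IndepFun.measure_mem_eq_lintegral {X : Ω → α} {Y : Ω → β}
    (hX : Measurable X) (hY : Measurable Y) (hXY : IndepFun X Y P) {S : Set (α × β)}
    (hS : MeasurableSet S) :
    P {ω | (X ω, Y ω) ∈ S} = ∫⁻ ω, P {ω' | (X ω', Y ω) ∈ S} ∂P := by
  have hmap := (indepFun_iff_map_prod_eq_prod_map_map hX.aemeasurable hY.aemeasurable).1 hXY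
  calc P {ω | (X ω, Y ω) ∈ S} = (P.map X).prod (P.map Y) S := by
        rw [← hmap, Measure.map_apply (hX.prodMk hY) hS]
        rfl
    _ = ∫⁻ y, P {ω | (X ω, y) ∈ S} ∂P.map Y := by
        rw [Measure.prod_apply_symm hS]
        exact lintegral_congr fun y => Measure.map_apply hX (hS.preimage measurable_prodMk_right)
    _ = ∫⁻ ω, P {ω' | (X ω', Y ω) ∈ S} ∂P :=
        lintegral_map (measurable_measure_mem_prodMk hX hS) hY

end

namespace ProbabilityTheory

theorem iIndepFun_of_map_eq_pi {Ω ι : Type*} [Fintype ι] {β : ι → Type*}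
    [∀ i, MeasurableSpace (β i)] [MeasurableSpace Ω] {P : Measure Ω} [IsProbabilityMeasure P]
    {V : ∀ i, Ω → β i} (hV : ∀ i, Measurable (V i)) {m : ∀ i, Measure (β i)}
    [∀ i, IsProbabilityMeasure (m i)] (h : P.map (fun ω i => V i ω) = Measure.pi m) :
    iIndepFun V P := by
  rw [iIndepFun_iff_map_fun_eq_pi_map fun i => (hV i).aemeasurable, h]
  congr with i : 1
  rw [← (measurePreserving_eval m i).map_eq, ← h,
    Measure.map_map (measurable_pi_apply i) (measurable_pi_lambda _ hV)]
  rfl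

theorem measure_forall_mem_le_prod_of_indepFun {Ω ι α β : Type*} [Fintype ι]
    [MeasurableSpace Ω] [MeasurableSpace α] [MeasurableSpace β] {P : Measure Ω}
    [IsProbabilityMeasure P] {X : ι → Ω → α} {V : ι → Ω → β} (hX : ∀ i, Measurable (X i))
    (hV : ∀ i, Measurable (V i)) (hXV : IndepFun (fun ω i => X i ω) (fun ω i => V i ω) P)
    (hVi : iIndepFun V P) (S : ι → Set (α × β)) (hS : ∀ i, MeasurableSet (S i))
    (h : ∀ᵐ ω ∂P, P {ω' | ∀ i, (X i ω', V i ω) ∈ S i} ≤ ∏ i, P {ω' | (X i ω', V i ω) ∈ S i}) :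
    P {ω | ∀ i, (X i ω, V i ω) ∈ S i} ≤ ∏ i, P {ω | (X i ω, V i ω) ∈ S i} := by
  set f : ι → β → ℝ≥0∞ := fun i w => P {ω' | (X i ω', w) ∈ S i}
  have hf : ∀ i, Measurable (f i) := fun i => measurable_measure_mem_prodMk (hX i) (hS i)
  have hSall : MeasurableSet {p : (ι → α) × (ι → β) | ∀ i, (p.1 i, p.2 i) ∈ S i} := by
    rw [ofPred_forall]
    exact .iInter fun i => (hS i).preimage (by fun_prop)
  calc P {ω | ∀ i, (X i ω, V i ω) ∈ S i}
      = ∫⁻ ω, P {ω' | ∀ i, (X i ω', V i ω) ∈ S i} ∂P :=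
        hXV.measure_mem_eq_lintegral (measurable_pi_lambda _ hX) (measurable_pi_lambda _ hV) hSall
    _ ≤ ∫⁻ ω, ∏ i, f i (V i ω) ∂P := lintegral_mono_ae h
    _ = ∏ i, ∫⁻ ω, f i (V i ω) ∂P :=
        lintegral_prod_eq_prod_lintegral_of_indepFun _ _ (hVi.comp f hf) fun i => (hf i).comp (hV i)
    _ = ∏ i, P {ω | (X i ω, V i ω) ∈ S i} := Finset.prod_congr rfl fun i _ =>
        ((hXV.comp (measurable_pi_apply i) (measurable_pi_apply i)).measure_mem_eq_lintegral
          (hX i) (hV i) (hS i)).symm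

end ProbabilityTheory

namespace IsNOD
variable {Ω : Type*} [MeasurableSpace Ω] {P : Measure Ω} {d : ℕ} {X : Fin d → Ω → ℝ}

theorem measure_forall_mem_le_prod_of_isLowerSet (hNOD : IsNOD P X) (s : Fin d → Set ℝ)
    (hs : ∀ i, IsLowerSet (s i)) :
    P {ω | ∀ i, X i ω ∈ s i} ≤ ∏ i, P {ω | X i ω ∈ s i} := by
  by_cases hne : ∀ i, (s i).Nonempty
  · choose a ha hunion using fun i => (hs i).exists_monotone_iUnion_Iic (hne i)
    simpa only [hunion] using measure_forall_mem_iUnion_le_prod (fun i n => Iic (a i n))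
      (fun i m n hmn => Iic_subset_Iic.2 (ha i hmn)) fun n => (hNOD fun i => a i n).1
  · obtain ⟨i, hi⟩ := not_forall.1 hne
    exact (measure_forall_mem_eq_zero_of_eq_empty (not_nonempty_iff_eq_empty.1 hi)).trans_le
      zero_le

/-- A closed half-line is not a countable increasing union of open ones, so upper sets need the
NOD inequality for closed upper orthants, obtained by continuity from above. -/
theorem measure_forall_ge_le_prod [IsFiniteMeasure P] (hX : ∀ i, Measurable (X i))
    (hNOD : IsNOD P X) (x : Fin d → ℝ) :
    P {ω | ∀ i, x i ≤ X i ω} ≤ ∏ i, P {ω | x i ≤ X i ω} := by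
  obtain ⟨u, hu_anti, hu_pos, hu_lim⟩ := exists_seq_strictAnti_tendsto (0 : ℝ)
  have key := measure_forall_mem_iInter_le_prod hX (fun i n => Ioi (x i - u n))
    (fun i m n hmn => Ioi_subset_Ioi (by linarith [hu_anti.antitone hmn]))
    (fun i n => measurableSet_Ioi) fun n => (hNOD fun i => x i - u n).2
  simpa only [iInter_Ioi_sub_eq_Ici hu_lim hu_pos, mem_Ici] using key

theorem measure_forall_mem_le_prod_of_isUpperSet [IsFiniteMeasure P]
    (hX : ∀ i, Measurable (X i)) (hNOD : IsNOD P X) (s : Fin d → Set ℝ)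
    (hs : ∀ i, IsUpperSet (s i)) :
    P {ω | ∀ i, X i ω ∈ s i} ≤ ∏ i, P {ω | X i ω ∈ s i} := by
  by_cases hne : ∀ i, (s i).Nonempty
  · choose b hb hunion using fun i => (hs i).exists_antitone_iUnion_Ici (hne i)
    simpa only [hunion] using measure_forall_mem_iUnion_le_prod (fun i n => Ici (b i n))
      (fun i m n hmn => Ici_subset_Ici.2 (hb i hmn)) fun n =>
        hNOD.measure_forall_ge_le_prod hX fun i => b i n
  · obtain ⟨i, hi⟩ := not_forall.1 hne
    exact (measure_forall_mem_eq_zero_of_eq_empty (not_nonempty_iff_eq_empty.1 hi)).trans_le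
      zero_le

theorem comp_monotone_indepFun {β : Type*} [MeasurableSpace β] [IsProbabilityMeasure P]
    {V : Fin d → Ω → β} (hNOD : IsNOD P X) (hX : ∀ i, Measurable (X i))
    (hV : ∀ i, Measurable (V i)) (hXV : IndepFun (fun ω i => X i ω) (fun ω i => V i ω) P)
    (hVi : iIndepFun V P) (g : Fin d → ℝ × β → ℝ) (hg : ∀ i, Measurable (g i))
    (hmono : ∀ᵐ ω ∂P, ∀ i, Monotone fun x => g i (x, V i ω)) :
    IsNOD P fun i ω => g i (X i ω, V i ω) := fun t =>
  ⟨measure_forall_mem_le_prod_of_indepFun hX hV hXV hVi (fun i => {p | g i p ≤ t i})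
      (fun i => measurableSet_le (hg i) measurable_const) <| by
        filter_upwards [hmono] with ω hω
        exact hNOD.measure_forall_mem_le_prod_of_isLowerSet
          (fun i => {x | g i (x, V i ω) ≤ t i}) fun i x y hyx hy => (hω i hyx).trans hy,
    measure_forall_mem_le_prod_of_indepFun hX hV hXV hVi (fun i => {p | t i < g i p})
      (fun i => measurableSet_lt measurable_const (hg i)) <| by
        filter_upwards [hmono] with ω hω
        exact hNOD.measure_forall_mem_le_prod_of_isUpperSet hX
          (fun i => {x | t i < g i (x, V i ω)}) fun i x y hxy (hx : t i < _) =>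
            hx.trans_le (hω i hxy)⟩

end IsNOD

theorem stmt12 {Ω : Type*} [MeasurableSpace Ω] (P : Measure Ω) [IsProbabilityMeasure P]
    {d : ℕ} (X V : Fin d → Ω → ℝ)
    (hXm : ∀ i, Measurable (X i)) (hVm : ∀ i, Measurable (V i))
    (hV : Measure.map (fun ω i => V i ω) P
        = (volume : Measure (Fin d → ℝ)).restrict (Set.univ.pi fun _ => Set.Icc (0:ℝ) 1))
    (hindep : IndepFun (fun ω i => X i ω) (fun ω i => V i ω) P)
    (F Fm : Fin d → ℝ → ℝ)
    (hF : ∀ i x, F i x = (P {ω | X i ω ≤ x}).toReal)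
    (hFm : ∀ i x, Fm i x = (P {ω | X i ω < x}).toReal)
    (U : Fin d → Ω → ℝ)
    (hU : ∀ i ω, U i ω = Fm i (X i ω) + V i ω * (F i (X i ω) - Fm i (X i ω)))
    (hNOD : IsNOD P X) :
    ∀ t : Fin d → ℝ,
      P {ω | ∀ i, U i ω ≤ t i} ≤ ∏ i, P {ω | U i ω ≤ t i} ∧
      P {ω | ∀ i, t i < U i ω} ≤ ∏ i, P {ω | t i < U i ω} := by
  have hFmono : ∀ i, Monotone (F i) := fun i x y hxy => by
    simpa only [hF] using monotone_toReal_measure_le P (X i) hxy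
  have hFmmono : ∀ i, Monotone (Fm i) := fun i x y hxy => by
    simpa only [hFm] using monotone_toReal_measure_lt P (X i) hxy
  have : IsProbabilityMeasure (volume.restrict (Icc (0 : ℝ) 1)) := ⟨by simp⟩
  have hVi : iIndepFun V P := iIndepFun_of_map_eq_pi hVm <| by
    rw [hV, volume_pi, Measure.restrict_pi_pi]
  have hVcube : ∀ᵐ ω ∂P, ∀ i, V i ω ∈ Icc (0 : ℝ) 1 := by
    have hcube := ae_restrict_mem (μ := (volume : Measure (Fin d → ℝ)))
      (MeasurableSet.univ_pi fun _ => measurableSet_Icc (a := (0 : ℝ)) (b := 1))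
    rw [← hV] at hcube
    filter_upwards [ae_of_ae_map (measurable_pi_lambda _ hVm).aemeasurable hcube] with ω hω i
    exact hω i (mem_univ i)
  obtain rfl : U = fun i ω => Fm i (X i ω) + V i ω * (F i (X i ω) - Fm i (X i ω)) :=
    funext fun i => funext (hU i)
  refine hNOD.comp_monotone_indepFun hXm hVm hindep hVi
    (fun i p => Fm i p.1 + p.2 * (F i p.1 - Fm i p.1)) (fun i => ?_) ?_
  · have := (hFmono i).measurable
    have := (hFmmono i).measurable
    fun_prop
  · filter_upwards [hVcube] with ω hω i
    exact (hFmmono i).add_mul_sub (hFmono i) (hω i)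
end
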